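/- arXiv:0705.3658 — 10 statements merged into one kernel-verified Lean document; each statement's English description precedes it below -/
import Mathlib

section
/- For every real 2×2 matrix A with det A = 1, the matrix φ(A) satisfies φ(A)ᵀ · R · φ(A) = R and det φ(A) = 1; in other words φ maps SL(2,ℝ) into the special orthogonal group of the indefinite form given by R. -/
/-!
In the coordinates `x², √2·x·y, y²` a binary quadratic form `α x² + β x y + γ y²` has coordinate
vector `v = (α, β/√2, γ)`, and `vᵀ R v = β²/2 - 2αγ` is half its discriminant. Substitution by `A`
multiplies the discriminant by `(det A)²` and the determinant of the symmetric square is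
`(det A)³`. Both are polynomial identities in the entries of `A` in which `√2` only occurs squared.
-/

open Matrix

/-- The symmetric square of a real 2×2 matrix with respect to the basis
`x², √2·x·y, y²`. -/
noncomputable def symSq (A : Matrix (Fin 2) (Fin 2) ℝ) : Matrix (Fin 3) (Fin 3) ℝ :=
  !![A 0 0 ^ 2, Real.sqrt 2 * A 0 0 * A 0 1, A 0 1 ^ 2;
     Real.sqrt 2 * A 0 0 * A 1 0, A 0 0 * A 1 1 + A 0 1 * A 1 0, Real.sqrt 2 * A 0 1 * A 1 1;
     A 1 0 ^ 2, Real.sqrt 2 * A 1 0 * A 1 1, A 1 1 ^ 2]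

/-- The reference indefinite bilinear form of signature (2,1). -/
def Rform : Matrix (Fin 3) (Fin 3) ℝ :=
  !![0, 0, -1; 0, 1, 0; -1, 0, 0]

theorem symSq_transpose_mul_Rform_mul_symSq (A : Matrix (Fin 2) (Fin 2) ℝ) :
    (symSq A)ᵀ * Rform * symSq A = A.det ^ 2 • Rform := by
  have sqrt_two_sq : Real.sqrt 2 ^ 2 = 2 := Real.sq_sqrt zero_le_two
  ext i j
  fin_cases i <;> fin_cases j <;>
    simp only [symSq, Rform, det_fin_two, mul_apply, transpose_apply, Matrix.smul_apply,
      Fin.sum_univ_three, of_apply, cons_val', cons_val, cons_val_fin_one, Fin.zero_eta,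
      Fin.mk_one, Fin.reduceFinMk, Fin.isValue] <;>
    ring_nf <;> simp only [sqrt_two_sq] <;> ring

theorem det_symSq (A : Matrix (Fin 2) (Fin 2) ℝ) : (symSq A).det = A.det ^ 3 := by
  have sqrt_two_sq : Real.sqrt 2 ^ 2 = 2 := Real.sq_sqrt zero_le_two
  simp only [symSq, det_fin_two, det_fin_three, of_apply, cons_val', cons_val, cons_val_fin_one,
    Fin.isValue]
  ring_nf
  simp only [sqrt_two_sq]
  ring

theorem symSq_mem_SO (A : Matrix (Fin 2) (Fin 2) ℝ) (hA : A.det = 1) :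
    (symSq A)ᵀ * Rform * symSq A = Rform ∧ (symSq A).det = 1 := by
  rw [symSq_transpose_mul_Rform_mul_symSq, det_symSq, hA]
  norm_num
end

section
/- If A is a real 2×2 matrix with det A = 1 such that every entry of φ(A) is an integer, then (trace A)² is an integer. -/
/-! The character of `Sym² A` is `tr² A - det A`, so integrality of the diagonal of `symSq A`
gives integrality of `tr² A` as soon as `det A = 1`. -/

open Matrix

theorem trace_symSq (A : Matrix (Fin 2) (Fin 2) ℝ) : (symSq A).trace = A.trace ^ 2 - A.det := by
  simp only [symSq, trace_fin_three, trace_fin_two, det_fin_two, of_apply, cons_val',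
    cons_val_zero, cons_val_one, cons_val_two, empty_val', cons_val_fin_one, head_cons,
    tail_cons, head_fin_const]
  ring

theorem Matrix.exists_int_trace_eq_of_diag {n R : Type*} [Fintype n] [Ring R]
    (M : Matrix n n R) (hM : ∀ i, ∃ k : ℤ, M i i = k) : ∃ k : ℤ, M.trace = k := by
  choose k hk using hM
  exact ⟨∑ i, k i, by simp [trace, hk]⟩

theorem sq_trace_isInt_of_symSq_isInt (A : Matrix (Fin 2) (Fin 2) ℝ)
    (hA : A.det = 1) (hInt : ∀ i j, ∃ n : ℤ, symSq A i j = (n : ℝ)) :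
    ∃ n : ℤ, A.trace ^ 2 = (n : ℝ) := by
  obtain ⟨k, hk⟩ := (symSq A).exists_int_trace_eq_of_diag fun i => hInt i i
  refine ⟨k + 1, ?_⟩
  rw [Int.cast_add, Int.cast_one, ← hk, trace_symSq, hA, sub_add_cancel]
end

section
/- Let U ⊆ ℂ be open, let a₂, a₁, a₀ : ℂ → ℂ be differentiable on U, and let f, g : ℂ → ℂ be three times differentiable on U. If both f and g are solutions on U of the second-order linear ODE a₂·y'' + a₁·y' + a₀·y = 0, then the product h = f·g is a solution on U of the symmetric square, the third-order linear ODE a₂²·y''' + 3·a₁·a₂·y'' + (a₂·(4·a₀ + a₁') + a₁·(2·a₁ − a₂'))·y' + 2·(a₂·a₀' + a₀·(2·a₁ − a₂'))·y = 0 (all derivatives of coefficients taken on U). -/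
/-!
Holomorphy on the open set `U` makes `f` and `g` infinitely differentiable there. Expand the
derivatives of `f g` by Leibniz's rule up to order three, and write `L y = a₂ y'' + a₁ y' + a₀ y`.
The symmetric-square expression of `f g` is then the combination
`a₂ g · (Lf)' + a₂ f · (Lg)' + (3 a₂ g' + (2a₁ − a₂') g) · Lf + (3 a₂ f' + (2a₁ − a₂') f) · Lg`
of `L f = L g = 0` and their derivatives.
-/

open Set

section Leibniz

variable {𝕜 : Type*} [NontriviallyNormedField 𝕜] {U : Set 𝕜} {F G f g : 𝕜 → 𝕜} {G' z : 𝕜}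

lemma deriv_eq_of_eqOn_of_hasDerivAt (hFG : EqOn F G U) (hU : IsOpen U) (hz : z ∈ U)
    (hG : HasDerivAt G G' z) : deriv F z = G' :=
  (hG.congr_of_eventuallyEq (Filter.eventuallyEq_of_mem (hU.mem_nhds hz) hFG)).deriv

lemma HasDerivAt.eq_zero_of_eqOn_zero (hF : HasDerivAt F G' z) (hU : IsOpen U) (hz : z ∈ U)
    (h0 : EqOn F 0 U) : G' = 0 :=
  hF.deriv.symm.trans (deriv_eq_of_eqOn_of_hasDerivAt h0 hU hz (hasDerivAt_const z 0))

lemma eqOn_deriv_mul (hU : IsOpen U) (hf : DifferentiableOn 𝕜 f U)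
    (hg : DifferentiableOn 𝕜 g U) :
    EqOn (deriv fun w => f w * g w) (fun w => deriv f w * g w + f w * deriv g w) U :=
  fun _ hw => deriv_mul (hf.differentiableAt (hU.mem_nhds hw))
    (hg.differentiableAt (hU.mem_nhds hw))

lemma eqOn_deriv_deriv_mul (hU : IsOpen U) (hf : DifferentiableOn 𝕜 f U)
    (hf' : DifferentiableOn 𝕜 (deriv f) U) (hg : DifferentiableOn 𝕜 g U)
    (hg' : DifferentiableOn 𝕜 (deriv g) U) :
    EqOn (deriv (deriv fun w => f w * g w))
      (fun w => deriv (deriv f) w * g w + 2 * (deriv f w * deriv g w)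
        + f w * deriv (deriv g) w) U := by
  intro w hw
  have hmem := hU.mem_nhds hw
  refine deriv_eq_of_eqOn_of_hasDerivAt (eqOn_deriv_mul hU hf hg) hU hw ?_
  exact (((hf'.differentiableAt hmem).hasDerivAt.mul (hg.differentiableAt hmem).hasDerivAt).add
    ((hf.differentiableAt hmem).hasDerivAt.mul (hg'.differentiableAt hmem).hasDerivAt))
    |>.congr_deriv (by ring)

lemma eqOn_deriv_deriv_deriv_mul (hU : IsOpen U) (hf : DifferentiableOn 𝕜 f U)
    (hf' : DifferentiableOn 𝕜 (deriv f) U) (hf'' : DifferentiableOn 𝕜 (deriv (deriv f)) U)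
    (hg : DifferentiableOn 𝕜 g U) (hg' : DifferentiableOn 𝕜 (deriv g) U)
    (hg'' : DifferentiableOn 𝕜 (deriv (deriv g)) U) :
    EqOn (deriv (deriv (deriv fun w => f w * g w)))
      (fun w => deriv (deriv (deriv f)) w * g w + 3 * (deriv (deriv f) w * deriv g w)
        + 3 * (deriv f w * deriv (deriv g) w) + f w * deriv (deriv (deriv g)) w) U := by
  intro w hw
  have hmem := hU.mem_nhds hw
  refine deriv_eq_of_eqOn_of_hasDerivAt (eqOn_deriv_deriv_mul hU hf hf' hg hg') hU hw ?_
  exact ((((hf''.differentiableAt hmem).hasDerivAt.mul (hg.differentiableAt hmem).hasDerivAt).add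
    (((hf'.differentiableAt hmem).hasDerivAt.mul
      (hg'.differentiableAt hmem).hasDerivAt).const_mul 2)).add
    ((hf.differentiableAt hmem).hasDerivAt.mul (hg''.differentiableAt hmem).hasDerivAt))
    |>.congr_deriv (by ring)

end Leibniz

lemma deriv_secondOrderLinear_eq_zero {𝕜 : Type*} [NontriviallyNormedField 𝕜] {U : Set 𝕜}
    {a₂ a₁ a₀ y : 𝕜 → 𝕜} {z : 𝕜} (hU : IsOpen U) (hz : z ∈ U)
    (ha₂ : DifferentiableOn 𝕜 a₂ U) (ha₁ : DifferentiableOn 𝕜 a₁ U)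
    (ha₀ : DifferentiableOn 𝕜 a₀ U) (hy : DifferentiableOn 𝕜 y U)
    (hy' : DifferentiableOn 𝕜 (deriv y) U) (hy'' : DifferentiableOn 𝕜 (deriv (deriv y)) U)
    (hsol : ∀ w ∈ U, a₂ w * deriv (deriv y) w + a₁ w * deriv y w + a₀ w * y w = 0) :
    deriv a₂ z * deriv (deriv y) z + a₂ z * deriv (deriv (deriv y)) z
      + (deriv a₁ z * deriv y z + a₁ z * deriv (deriv y) z)
      + (deriv a₀ z * y z + a₀ z * deriv y z) = 0 := by
  have hmem := hU.mem_nhds hz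
  exact ((((ha₂.differentiableAt hmem).hasDerivAt.mul (hy''.differentiableAt hmem).hasDerivAt).add
    ((ha₁.differentiableAt hmem).hasDerivAt.mul (hy'.differentiableAt hmem).hasDerivAt)).add
    ((ha₀.differentiableAt hmem).hasDerivAt.mul (hy.differentiableAt hmem).hasDerivAt))
    |>.eq_zero_of_eqOn_zero hU hz hsol

theorem mul_solution_symmetric_square_general
    (U : Set ℂ) (hU : IsOpen U) (a₂ a₁ a₀ f g : ℂ → ℂ)
    (ha₂ : DifferentiableOn ℂ a₂ U) (ha₁ : DifferentiableOn ℂ a₁ U)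
    (ha₀ : DifferentiableOn ℂ a₀ U)
    (hf : DifferentiableOn ℂ f U)
    (hg : DifferentiableOn ℂ g U)
    (hfsol : ∀ z ∈ U, a₂ z * deriv (deriv f) z + a₁ z * deriv f z + a₀ z * f z = 0)
    (hgsol : ∀ z ∈ U, a₂ z * deriv (deriv g) z + a₁ z * deriv g z + a₀ z * g z = 0) :
    ∀ z ∈ U,
      (a₂ z) ^ 2 * deriv (deriv (deriv (fun w => f w * g w))) z
        + 3 * a₁ z * a₂ z * deriv (deriv (fun w => f w * g w)) z
        + (a₂ z * (4 * a₀ z + deriv a₁ z) + a₁ z * (2 * a₁ z - deriv a₂ z))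
            * deriv (fun w => f w * g w) z
        + 2 * (a₂ z * deriv a₀ z + a₀ z * (2 * a₁ z - deriv a₂ z)) * (f z * g z) = 0 := by
  intro z hz
  have hf' := hf.deriv hU
  have hf'' := hf'.deriv hU
  have hg' := hg.deriv hU
  have hg'' := hg'.deriv hU
  rw [eqOn_deriv_deriv_deriv_mul hU hf hf' hf'' hg hg' hg'' hz,
    eqOn_deriv_deriv_mul hU hf hf' hg hg' hz, eqOn_deriv_mul hU hf hg hz]
  linear_combination
    (a₂ z * g z) * deriv_secondOrderLinear_eq_zero hU hz ha₂ ha₁ ha₀ hf hf' hf'' hfsol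
    + (a₂ z * f z) * deriv_secondOrderLinear_eq_zero hU hz ha₂ ha₁ ha₀ hg hg' hg'' hgsol
    + (3 * a₂ z * deriv g z + (2 * a₁ z - deriv a₂ z) * g z) * hfsol z hz
    + (3 * a₂ z * deriv f z + (2 * a₁ z - deriv a₂ z) * f z) * hgsol z hz

/-- If `f` and `g` solve the second-order linear ODE `a₂·y'' + a₁·y' + a₀·y = 0` on an open
set `U`, then `f·g` solves the symmetric square, the third-order linear ODE
`a₂²·y''' + 3a₁a₂·y'' + (a₂(4a₀+a₁') + a₁(2a₁−a₂'))·y' + 2(a₂a₀' + a₀(2a₁−a₂'))·y = 0`. -/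
theorem mul_solution_symmetric_square
    (U : Set ℂ) (hU : IsOpen U) (a₂ a₁ a₀ f g : ℂ → ℂ)
    (ha₂ : DifferentiableOn ℂ a₂ U) (ha₁ : DifferentiableOn ℂ a₁ U)
    (ha₀ : DifferentiableOn ℂ a₀ U)
    (hf : DifferentiableOn ℂ f U) (hf' : DifferentiableOn ℂ (deriv f) U)
    (hf'' : DifferentiableOn ℂ (deriv (deriv f)) U)
    (hg : DifferentiableOn ℂ g U) (hg' : DifferentiableOn ℂ (deriv g) U)
    (hg'' : DifferentiableOn ℂ (deriv (deriv g)) U)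
    (hfsol : ∀ z ∈ U, a₂ z * deriv (deriv f) z + a₁ z * deriv f z + a₀ z * f z = 0)
    (hgsol : ∀ z ∈ U, a₂ z * deriv (deriv g) z + a₁ z * deriv g z + a₀ z * g z = 0) :
    ∀ z ∈ U,
      (a₂ z) ^ 2 * deriv (deriv (deriv (fun w => f w * g w))) z
        + 3 * a₁ z * a₂ z * deriv (deriv (fun w => f w * g w)) z
        + (a₂ z * (4 * a₀ z + deriv a₁ z) + a₁ z * (2 * a₁ z - deriv a₂ z))
            * deriv (fun w => f w * g w) z
        + 2 * (a₂ z * deriv a₀ z + a₀ z * (2 * a₁ z - deriv a₂ z)) * (f z * g z) = 0 :=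
  mul_solution_symmetric_square_general U hU a₂ a₁ a₀ f g ha₂ ha₁ ha₀ hf hg hfsol hgsol
end

section
/- Let α₁, α₂, β₁, β₂ be nonzero complex numbers with α₁·α₂ = −β₁·β₂. Then α₁² + α₂² = β₁² + β₂² if and only if the sets {α₁, α₂} and {β₁, β₂} have a common element. -/
/-!
Since `α₁α₂ = β₁ · (-β₂)`, the identity `α₁² + α₂² - β₁² - β₂² = (α₁ + α₂)² - (β₁ - β₂)²` shows that
the sums of squares agree iff `α₁ + α₂ = ±(β₁ - β₂)`. In the case `+`, the pairs `{α₁, α₂}` and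
`{β₁, -β₂}` have the same sum and product, hence coincide; so `β₁ ∈ {α₁, α₂}`. The case `-` is the
same with `β₁, β₂` exchanged.
-/

section

variable {R : Type*} [CommRing R] [IsDomain R]

theorem eq_and_eq_or_eq_and_eq_of_add_eq_add_of_mul_eq_mul {a b c d : R}
    (hsum : a + b = c + d) (hprod : a * b = c * d) : a = c ∧ b = d ∨ a = d ∧ b = c := by
  have : (a - c) * (a - d) = 0 := by linear_combination a * hsum - hprod
  rcases mul_eq_zero.mp this with h | h
  · exact Or.inl ⟨sub_eq_zero.mp h, by linear_combination hsum - h⟩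
  · exact Or.inr ⟨sub_eq_zero.mp h, by linear_combination hsum - h⟩

theorem sq_add_sq_eq_sq_add_sq_iff_of_mul_eq_neg_mul {a b c d : R} (h : a * b = -(c * d)) :
    a ^ 2 + b ^ 2 = c ^ 2 + d ^ 2 ↔ a + b = c - d ∨ a + b = d - c := by
  have hdiff : a ^ 2 + b ^ 2 - (c ^ 2 + d ^ 2) = (a + b) ^ 2 - (c - d) ^ 2 := by
    linear_combination (-2) * h
  rw [← sub_eq_zero, hdiff, sub_eq_zero, sq_eq_sq_iff_eq_or_eq_neg, neg_sub]

theorem add_eq_sub_iff_of_mul_eq_neg_mul {a b c d : R} (h : a * b = -(c * d)) (hc : c ≠ 0) :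
    a + b = c - d ↔ a = c ∨ b = c := by
  have hprod : a * b = c * -d := by rw [h, mul_neg]
  constructor
  · intro hsum
    exact (eq_and_eq_or_eq_and_eq_of_add_eq_add_of_mul_eq_mul
      (hsum.trans (sub_eq_add_neg c d)) hprod).imp And.left And.right
  · rintro (rfl | rfl)
    · rw [mul_left_cancel₀ hc hprod, sub_eq_add_neg]
    · rw [mul_left_cancel₀ hc ((mul_comm _ _).trans hprod), add_comm, sub_eq_add_neg]

end

theorem sum_sq_eq_iff_common_eigenvalue_general
    (α₁ α₂ β₁ β₂ : ℂ) (hβ₁ : β₁ ≠ 0) (hβ₂ : β₂ ≠ 0)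
    (hdet : α₁ * α₂ = -(β₁ * β₂)) :
    α₁ ^ 2 + α₂ ^ 2 = β₁ ^ 2 + β₂ ^ 2 ↔
      ∃ x : ℂ, x ∈ ({α₁, α₂} : Set ℂ) ∧ x ∈ ({β₁, β₂} : Set ℂ) := by
  have hdet' : α₁ * α₂ = -(β₂ * β₁) := by rw [hdet, mul_comm]
  rw [sq_add_sq_eq_sq_add_sq_iff_of_mul_eq_neg_mul hdet, add_eq_sub_iff_of_mul_eq_neg_mul hdet hβ₁,
    add_eq_sub_iff_of_mul_eq_neg_mul hdet' hβ₂]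
  simp only [Set.mem_insert_iff, Set.mem_singleton_iff]
  constructor
  · rintro ((h | h) | (h | h))
    exacts [⟨α₁, .inl rfl, .inl h⟩, ⟨α₂, .inr rfl, .inl h⟩, ⟨α₁, .inl rfl, .inr h⟩,
      ⟨α₂, .inr rfl, .inr h⟩]
  · rintro ⟨x, rfl | rfl, rfl | rfl⟩ <;> simp

/-- For nonzero complex numbers with `α₁·α₂ = −β₁·β₂`, one has
`α₁² + α₂² = β₁² + β₂²` iff `{α₁, α₂}` and `{β₁, β₂}` share an element. -/
theorem sum_sq_eq_iff_common_eigenvalue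
    (α₁ α₂ β₁ β₂ : ℂ) (hα₁ : α₁ ≠ 0) (hα₂ : α₂ ≠ 0) (hβ₁ : β₁ ≠ 0) (hβ₂ : β₂ ≠ 0)
    (hdet : α₁ * α₂ = -(β₁ * β₂)) :
    α₁ ^ 2 + α₂ ^ 2 = β₁ ^ 2 + β₂ ^ 2 ↔
      ∃ x : ℂ, x ∈ ({α₁, α₂} : Set ℂ) ∧ x ∈ ({β₁, β₂} : Set ℂ) :=
  sum_sq_eq_iff_common_eigenvalue_general α₁ α₂ β₁ β₂ hβ₁ hβ₂ hdet
end

section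
/- Levelt's rigidity theorem: let A, B ∈ GL(n,ℂ) be such that no eigenvalue of A is an eigenvalue of B, and such that A·B⁻¹ is a pseudo-reflection, i.e. the matrix A·B⁻¹ − I has rank 1. If A' is conjugate to A, B' is conjugate to B, and A'·B'⁻¹ is conjugate to A·B⁻¹ (all conjugations in GL(n,ℂ)), then there is a single P ∈ GL(n,ℂ) with A' = P·A·P⁻¹ and B' = P·B·P⁻¹. -/
/-!
Write `A - B = u wᵀ`. If `A` and `B` have no common eigenvalue, the rows `w Aᵏ` (`k < n`) form a
basis: otherwise the vectors killed by every `w Aᵏ` form a nonzero `A`-invariant subspace, and an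
eigenvector of `A` in it is killed by `w`, hence is an eigenvector of `B` for the same eigenvalue.

For a second such pair `(A', B')`, let `P` satisfy `w' A'ᵏ P = w Aᵏ` for `k < n`. As `χ_A' = χ_A`,
Cayley–Hamilton extends this to all `k`, which gives `P A = A' P` and `w' P = w`. The matrix
determinant lemma together with `adj (X - A) = ∑ₖ divX^[k+1] χ_A • Aᵏ` gives
`χ_B = χ_A + ∑ₖ divX^[k+1] χ_A * (w Aᵏ u)`, a triangular system in the moments `w Aᵏ u`.
So `χ_B' = χ_B` forces equal moments, that is `P u = u'`, and then `P B = B' P`.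
-/

open Matrix Polynomial Finset

namespace Polynomial

variable {R : Type*} [CommRing R]

theorem coeff_divX_iterate (f : R[X]) (k j : ℕ) : (divX^[k] f).coeff j = f.coeff (j + k) := by
  induction k generalizing j with
  | zero => rfl
  | succ k ih => rw [Function.iterate_succ_apply', coeff_divX, ih, add_right_comm, add_assoc]

theorem X_mul_divX_iterate_succ (f : R[X]) (k : ℕ) :
    X * divX^[k + 1] f = divX^[k] f - C (f.coeff k) := by
  rw [Function.iterate_succ_apply', eq_sub_iff_add_eq,
    show f.coeff k = (divX^[k] f).coeff 0 by rw [coeff_divX_iterate, zero_add], X_mul_divX_add]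

theorem divX_iterate_eq_C_of_natDegree_le {f : R[X]} {k : ℕ} (h : f.natDegree ≤ k) :
    divX^[k] f = C (f.coeff k) := by
  ext j
  rw [coeff_divX_iterate, coeff_C]
  rcases j with _ | j
  · simp
  · exact coeff_eq_zero_of_natDegree_lt (by omega)

theorem Monic.eq_zero_of_sum_divX_iterate_mul_C_eq_zero {f : R[X]} (hf : f.Monic)
    {c : ℕ → R} (h : ∑ j ∈ range f.natDegree, divX^[j + 1] f * C (c j) = 0) :
    ∀ k < f.natDegree, c k = 0 := by
  intro k
  induction k using Nat.strong_induction_on with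
  | _ k ih =>
  intro hk
  have hcoeff := congrArg (coeff · (f.natDegree - 1 - k)) h
  simp only [finsetSum_coeff, coeff_mul_C, coeff_divX_iterate, coeff_zero] at hcoeff
  rw [← hcoeff, sum_eq_single_of_mem k (mem_range.mpr hk)]
  · rw [show f.natDegree - 1 - k + (k + 1) = f.natDegree by omega, hf.coeff_natDegree, one_mul]
  · intro j _ hjk
    rcases lt_or_gt_of_ne hjk with hlt | hgt
    · rw [ih j hlt (hlt.trans hk), mul_zero]
    · rw [coeff_eq_zero_of_natDegree_lt (by omega), zero_mul]

end Polynomial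

namespace Matrix

section CommRing

variable {ι R : Type*} [Fintype ι] [DecidableEq ι] [CommRing R]

theorem _root_.RingHom.mapMatrix_vecMulVec {S : Type*} [CommRing S] (f : R →+* S)
    (u w : ι → R) : f.mapMatrix (vecMulVec u w) = vecMulVec (f ∘ u) (f ∘ w) := by
  ext; simp [vecMulVec_apply]

theorem map_pow_eq_of_charpoly_eq {ι' M : Type*} [Fintype ι'] [DecidableEq ι'] [AddCommGroup M]
    [Module R M] {A : Matrix ι ι R} {A' : Matrix ι' ι' R} (h : A.charpoly = A'.charpoly)
    (L : Matrix ι ι R →ₗ[R] M) (L' : Matrix ι' ι' R →ₗ[R] M)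
    (hL : ∀ k < Fintype.card ι, L (A ^ k) = L' (A' ^ k)) (k : ℕ) :
    L (A ^ k) = L' (A' ^ k) := by
  rw [pow_eq_aeval_mod_charpoly, pow_eq_aeval_mod_charpoly A', ← h]
  -- `A.charpoly = 1` covers the empty index type and the zero ring
  by_cases h1 : A.charpoly = 1
  · simp [h1]
  have := Nontrivial.of_polynomial_ne h1
  have hdeg : (X ^ k %ₘ A.charpoly).natDegree < Fintype.card ι :=
    A.charpoly_natDegree_eq_dim ▸ natDegree_modByMonic_lt _ A.charpoly_monic h1
  rw [aeval_eq_sum_range' hdeg, aeval_eq_sum_range' hdeg, map_sum, map_sum]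
  exact sum_congr rfl fun i hi => by rw [map_smul, map_smul, hL i (mem_range.mp hi)]

theorem sum_divX_iterate_smul_mul_charmatrix (A : Matrix ι ι R) :
    (∑ k ∈ range (Fintype.card ι), divX^[k + 1] A.charpoly • (A ^ k).map C) * charmatrix A =
      A.charpoly • 1 := by
  nontriviality R
  set f := A.charpoly
  set N := Fintype.card ι
  set σ : ℕ → R[X] := fun k => divX^[k] f
  set Â := (C : R →+* R[X]).mapMatrix A
  have hpow : ∀ k, (A ^ k).map C = Â ^ k := fun k => map_pow (C : R →+* R[X]).mapMatrix A k
  have hCH : ∑ k ∈ range (N + 1), C (f.coeff k) • Â ^ k = 0 := by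
    have h := congrArg (C : R →+* R[X]).mapMatrix (aeval_self_charpoly A)
    rw [aeval_eq_sum_range, map_sum, map_zero, charpoly_natDegree_eq_dim] at h
    simpa [← hpow, Matrix.map_smul'] using h
  have hX : ∀ k, σ (k + 1) • Â ^ k * scalar ι X = (σ k - C (f.coeff k)) • Â ^ k := by
    intro k
    rw [smul_mul_assoc, scalar_apply, ← smul_one_eq_diagonal, Matrix.mul_smul, mul_one, smul_smul,
      mul_comm, X_mul_divX_iterate_succ]
  calc (∑ k ∈ range N, σ (k + 1) • (A ^ k).map C) * charmatrix A
      = ∑ k ∈ range N, ((σ k • Â ^ k - σ (k + 1) • Â ^ (k + 1)) - C (f.coeff k) • Â ^ k) := by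
        simp only [charmatrix, hpow, sum_mul, mul_sub, hX, ← sum_sub_distrib]
        refine sum_congr rfl fun k _ => ?_
        rw [smul_mul_assoc, ← pow_succ, sub_smul]
        abel
    _ = f • 1 - (σ N • Â ^ N + ∑ k ∈ range N, C (f.coeff k) • Â ^ k) := by
        rw [sum_sub_distrib, sum_range_sub']
        simp only [σ, Function.iterate_zero, id_eq, pow_zero]
        abel
    _ = f • 1 := by
        rw [show σ N = C (f.coeff N) from
            divX_iterate_eq_C_of_natDegree_le (charpoly_natDegree_eq_dim A).le,
          add_comm, ← sum_range_succ, hCH, sub_zero]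

theorem adjugate_charmatrix (A : Matrix ι ι R) :
    adjugate (charmatrix A) =
      ∑ k ∈ range (Fintype.card ι), divX^[k + 1] A.charpoly • (A ^ k).map C :=
  (isRegular_of_isLeftRegular_det A.charpoly_monic.isRegular.left).right <| by
    dsimp only
    rw [adjugate_mul, sum_divX_iterate_smul_mul_charmatrix, charpoly]

theorem det_add_vecMulVec_of_isUnit {M : Matrix ι ι R} (hM : IsUnit M.det) (u w : ι → R) :
    (M + vecMulVec u w).det = M.det + w ⬝ᵥ (adjugate M *ᵥ u) := by
  rw [vecMulVec_eq Unit, det_add_replicateCol_mul_replicateRow hM, det_unique (n := Unit),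
    add_apply, one_apply_eq, ← replicateRow_vecMul, replicateRow_mul_replicateCol_apply, inv_def,
    vecMul_smul, smul_dotProduct, mul_add, mul_one, smul_eq_mul, ← mul_assoc,
    Ring.mul_inverse_cancel _ hM, one_mul, dotProduct_mulVec]

theorem det_add_vecMulVec [IsDomain R] {M : Matrix ι ι R} (hM : M.det ≠ 0) (u w : ι → R) :
    (M + vecMulVec u w).det = M.det + w ⬝ᵥ (adjugate M *ᵥ u) := by
  let φ := algebraMap R (FractionRing R)
  apply IsFractionRing.injective R (FractionRing R)
  have hφM : IsUnit (φ.mapMatrix M).det := by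
    rw [← RingHom.map_det, isUnit_iff_ne_zero]
    exact (map_ne_zero_iff _ (IsFractionRing.injective R _)).mpr hM
  have hmulVec : φ ∘ (adjugate M *ᵥ u) = adjugate (φ.mapMatrix M) *ᵥ (φ ∘ u) := by
    ext; simp [RingHom.map_mulVec, ← RingHom.mapMatrix_apply, RingHom.map_adjugate]
  rw [RingHom.map_det, map_add, RingHom.mapMatrix_vecMulVec, det_add_vecMulVec_of_isUnit hφM,
    map_add, RingHom.map_det, RingHom.map_dotProduct, hmulVec]

theorem charpoly_sub_vecMulVec [IsDomain R] (A : Matrix ι ι R) (u w : ι → R) :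
    (A - vecMulVec u w).charpoly = A.charpoly +
      ∑ k ∈ range (Fintype.card ι), divX^[k + 1] A.charpoly * C (w ⬝ᵥ (A ^ k *ᵥ u)) := by
  have hchar : charmatrix (A - vecMulVec u w) = charmatrix A + vecMulVec (C ∘ u) (C ∘ w) := by
    rw [charmatrix, charmatrix, map_sub, RingHom.mapMatrix_vecMulVec, sub_sub_eq_add_sub,
      add_sub_right_comm]
  have hC : ∀ k, (C ∘ w) ⬝ᵥ ((A ^ k).map C *ᵥ (C ∘ u)) = C (w ⬝ᵥ (A ^ k *ᵥ u)) := by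
    intro k
    rw [RingHom.map_dotProduct]
    congr 1
    funext i
    exact (RingHom.map_mulVec _ _ _ _).symm
  rw [charpoly, hchar, det_add_vecMulVec A.charpoly_monic.ne_zero, adjugate_charmatrix,
    sum_mulVec, dotProduct_sum]
  simp [smul_mulVec, dotProduct_smul, hC, charpoly]

theorem isRoot_charpoly_iff_det_sub_smul_one_eq_zero (A : Matrix ι ι R) (μ : R) :
    A.charpoly.IsRoot μ ↔ (A - μ • 1).det = 0 := by
  rw [IsRoot, eval_charpoly, ← neg_sub, det_neg, scalar_apply, ← smul_one_eq_diagonal,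
    (isUnit_neg_one.pow _).mul_right_eq_zero]

theorem rank_conj_sub_one {Q : Matrix ι ι R} (hQ : IsUnit Q) (M : Matrix ι ι R) :
    (Q * M * Q⁻¹ - 1).rank = (M - 1).rank := by
  have hQ' := (isUnit_iff_isUnit_det Q).mp hQ
  rw [show Q * M * Q⁻¹ - 1 = Q * (M - 1) * Q⁻¹ by
      rw [mul_sub, sub_mul, mul_one, mul_nonsing_inv Q hQ'],
    rank_mul_eq_left_of_isUnit_det _ _ (isUnit_nonsing_inv_det Q hQ'),
    rank_mul_eq_right_of_isUnit_det _ _ hQ']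

end CommRing

section Field

variable {ι K : Type*} [Fintype ι] [Field K]

theorem exists_mulVec_eq_smul_of_mulVec_mem [IsAlgClosed K] {A : Matrix ι ι K}
    {V : Submodule K (ι → K)} (hV : V ≠ ⊥) (hAV : ∀ y ∈ V, A *ᵥ y ∈ V) :
    ∃ μ : K, ∃ y ∈ V, y ≠ 0 ∧ A *ᵥ y = μ • y := by
  have : Nontrivial V := Submodule.nontrivial_iff_ne_bot.mpr hV
  obtain ⟨μ, hμ⟩ := Module.End.exists_eigenvalue (A.mulVecLin.restrict hAV)
  obtain ⟨y, hy⟩ := hμ.exists_hasEigenvector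
  exact ⟨μ, y, y.2, by simpa using hy.2, congrArg Subtype.val hy.apply_eq_smul⟩

theorem exists_eq_vecMulVec_of_rank_le_one {m : Type*} [DecidableEq ι] {M : Matrix m ι K}
    (h : M.rank ≤ 1) : ∃ (u : m → K) (w : ι → K), M = vecMulVec u w := by
  obtain ⟨v, hv⟩ := finrank_le_one_iff.mp h
  choose c hc using fun j => hv ⟨M *ᵥ Pi.single j 1, LinearMap.mem_range_self M.mulVecLin _⟩
  refine ⟨v, c, ext fun i j => ?_⟩
  have := congrFun (congrArg Subtype.val (hc j)) i
  simp only [SetLike.val_smul, Pi.smul_apply, smul_eq_mul, mulVec_single_one] at this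
  rw [vecMulVec_apply, mul_comm]
  exact this.symm

theorem exists_sub_eq_vecMulVec_of_rank_mul_inv_sub_one_le_one [DecidableEq ι]
    {A B : Matrix ι ι K} (hB : IsUnit B) (h : (A * B⁻¹ - 1).rank ≤ 1) :
    ∃ u w : ι → K, A - B = vecMulVec u w := by
  obtain ⟨u, w, huw⟩ := exists_eq_vecMulVec_of_rank_le_one h
  refine ⟨u, w ᵥ* B, ?_⟩
  rw [← vecMulVec_mul, ← huw, sub_mul, one_mul,
    nonsing_inv_mul_cancel_right _ _ ((isUnit_iff_isUnit_det B).mp hB)]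

end Field

section Krylov

variable {R : Type*} [CommRing R] {n : ℕ}

def krylov (A : Matrix (Fin n) (Fin n) R) (w : Fin n → R) : Matrix (Fin n) (Fin n) R :=
  of fun k => w ᵥ* A ^ (k : ℕ)

@[simp]
theorem krylov_apply (A : Matrix (Fin n) (Fin n) R) (w : Fin n → R) (k : Fin n) :
    krylov A w k = w ᵥ* A ^ (k : ℕ) :=
  rfl

theorem vecMul_pow_vecMul_eq_of_krylov_mul_eq {A A' P : Matrix (Fin n) (Fin n) R}
    {w w' : Fin n → R} (hchar : A'.charpoly = A.charpoly) (h : krylov A' w' * P = krylov A w)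
    (k : ℕ) : w' ᵥ* A' ^ k ᵥ* P = w ᵥ* A ^ k := by
  let L' : Matrix (Fin n) (Fin n) R →ₗ[R] Fin n → R :=
    { toFun := fun M => w' ᵥ* M ᵥ* P
      map_add' := by simp [vecMul_add, add_vecMul]
      map_smul' := by simp [vecMul_smul, smul_vecMul] }
  let L : Matrix (Fin n) (Fin n) R →ₗ[R] Fin n → R :=
    { toFun := fun M => w ᵥ* M
      map_add' := by simp [vecMul_add]
      map_smul' := by simp [vecMul_smul] }
  exact map_pow_eq_of_charpoly_eq hchar L' L
    (fun k hk => congrFun h ⟨k, by simpa using hk⟩) k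

theorem exists_eigenvector_of_not_isUnit_krylov {K : Type*} [Field K] [IsAlgClosed K]
    {A : Matrix (Fin n) (Fin n) K} {w : Fin n → K} (h : ¬IsUnit (krylov A w)) :
    ∃ μ : K, ∃ y, y ≠ 0 ∧ A *ᵥ y = μ • y ∧ w ⬝ᵥ y = 0 := by
  rw [isUnit_iff_isUnit_det, isUnit_iff_ne_zero, not_not, ← exists_mulVec_eq_zero_iff] at h
  obtain ⟨x, hx0, hx⟩ := h
  let V : Submodule K (Fin n → K) :=
    ⨅ k : ℕ, LinearMap.ker (dotProductBilin K K w ∘ₗ (A ^ k).mulVecLin)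
  have hmem : ∀ y, y ∈ V ↔ ∀ k : ℕ, w ⬝ᵥ (A ^ k *ᵥ y) = 0 := by
    intro y; simp [V, Submodule.mem_iInf, dotProductBilin]
  let L : Matrix (Fin n) (Fin n) K →ₗ[K] K :=
    { toFun := fun M => w ⬝ᵥ (M *ᵥ x)
      map_add' := by simp [add_mulVec, dotProduct_add]
      map_smul' := by simp [smul_mulVec, dotProduct_smul] }
  have hxV : x ∈ V := (hmem x).mpr fun k => map_pow_eq_of_charpoly_eq rfl L 0
    (fun k hk => by
      simpa [L, mulVec, dotProduct_mulVec] using congrFun hx ⟨k, by simpa using hk⟩) k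
  obtain ⟨μ, y, hyV, hy0, hAy⟩ := exists_mulVec_eq_smul_of_mulVec_mem (V := V)
    (fun h => hx0 (by simpa [h] using hxV)) fun y hy => (hmem _).mpr fun k => by
      rw [mulVec_mulVec, ← pow_succ]; exact (hmem y).mp hy (k + 1)
  exact ⟨μ, y, hy0, hAy, by simpa using (hmem y).mp hyV 0⟩

theorem isUnit_krylov_of_sub_eq_vecMulVec {K : Type*} [Field K] [IsAlgClosed K]
    {A B : Matrix (Fin n) (Fin n) K} {u w : Fin n → K} (hAB : A - B = vecMulVec u w)
    (hspec : ∀ μ, ¬(A.charpoly.IsRoot μ ∧ B.charpoly.IsRoot μ)) : IsUnit (krylov A w) := by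
  obtain rfl : B = A - vecMulVec u w := by rw [← hAB, sub_sub_cancel]
  by_contra h
  obtain ⟨μ, y, hy0, hAy, hwy⟩ := exists_eigenvector_of_not_isUnit_krylov h
  have hBy : (A - vecMulVec u w) *ᵥ y = μ • y := by
    simp [sub_mulVec, vecMulVec_mulVec, hwy, hAy]
  refine hspec μ ⟨?_, ?_⟩ <;>
    rw [isRoot_charpoly_iff_det_sub_smul_one_eq_zero, ← exists_mulVec_eq_zero_iff] <;>
    exact ⟨y, hy0, by simp [sub_mulVec, smul_mulVec, hAy, hBy]⟩

theorem exists_conj_of_sub_eq_vecMulVec [IsDomain R] {A B A' B' : Matrix (Fin n) (Fin n) R}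
    {u w u' w' : Fin n → R} (hAB : A - B = vecMulVec u w) (hAB' : A' - B' = vecMulVec u' w')
    (hS : IsUnit (krylov A w)) (hS' : IsUnit (krylov A' w'))
    (hA : A'.charpoly = A.charpoly) (hB : B'.charpoly = B.charpoly) :
    ∃ P, IsUnit P ∧ A' = P * A * P⁻¹ ∧ B' = P * B * P⁻¹ := by
  obtain rfl : B = A - vecMulVec u w := by rw [← hAB, sub_sub_cancel]
  obtain rfl : B' = A' - vecMulVec u' w' := by rw [← hAB', sub_sub_cancel]
  obtain ⟨P, hP, hSP⟩ : ∃ P, IsUnit P ∧ krylov A' w' * P = krylov A w :=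
    ⟨_, (isUnit_nonsing_inv_iff.mpr hS').mul hS,
      mul_nonsing_inv_cancel_left _ _ ((isUnit_iff_isUnit_det _).mp hS')⟩
  have hPdet := (isUnit_iff_isUnit_det _).mp hP
  have hrows := vecMul_pow_vecMul_eq_of_krylov_mul_eq hA hSP
  have hS'inj := hS'.isRegular.left
  have hPA : P * A = A' * P := hS'inj <| by
    show krylov A' w' * (P * A) = krylov A' w' * (A' * P)
    rw [← mul_assoc, hSP]
    funext k
    calc (krylov A w * A) k = w ᵥ* A ^ ((k : ℕ) + 1) := by
          simp [mul_apply_eq_vecMul, vecMul_vecMul, pow_succ]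
      _ = w' ᵥ* A' ^ ((k : ℕ) + 1) ᵥ* P := (hrows _).symm
      _ = (krylov A' w' * (A' * P)) k := by
          simp [mul_apply_eq_vecMul, vecMul_vecMul, pow_succ, mul_assoc]
  have hmoments : krylov A' w' *ᵥ u' = krylov A w *ᵥ u := by
    rw [charpoly_sub_vecMulVec, charpoly_sub_vecMulVec, hA, add_right_inj, ← sub_eq_zero,
      ← sum_sub_distrib] at hB
    have hc := A.charpoly_monic.eq_zero_of_sum_divX_iterate_mul_C_eq_zero
      (c := fun k => w' ⬝ᵥ (A' ^ k *ᵥ u') - w ⬝ᵥ (A ^ k *ᵥ u)) (by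
        simpa [charpoly_natDegree_eq_dim, mul_sub] using hB)
    funext k
    simpa [mulVec, dotProduct_mulVec, sub_eq_zero] using hc k (by simp)
  have hPu : P *ᵥ u = u' := isLeftRegular_iff_mulVec_injective.mp hS'inj <| by
    rw [mulVec_mulVec, hSP, hmoments]
  have hwP : w' ᵥ* P = w := by simpa using hrows 0
  have hPB : P * (A - vecMulVec u w) = (A' - vecMulVec u' w') * P := by
    rw [mul_sub, sub_mul, hPA, mul_vecMulVec, vecMulVec_mul, hPu, hwP]
  refine ⟨P, hP, ?_, ?_⟩
  · rw [hPA, mul_nonsing_inv_cancel_right _ _ hPdet]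
  · rw [hPB, mul_nonsing_inv_cancel_right _ _ hPdet]

end Krylov

end Matrix

theorem levelt_rigidity_general (n : ℕ)
    (A B A' B' : Matrix (Fin n) (Fin n) ℂ)
    (hB : IsUnit B) (hB' : IsUnit B')
    (hdisj : ∀ μ : ℂ, ¬((A - μ • (1 : Matrix (Fin n) (Fin n) ℂ)).det = 0 ∧
      (B - μ • (1 : Matrix (Fin n) (Fin n) ℂ)).det = 0))
    (hpseudo : (A * B⁻¹ - 1).rank = 1)
    (hconjA : ∃ Q : Matrix (Fin n) (Fin n) ℂ, IsUnit Q ∧ A' = Q * A * Q⁻¹)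
    (hconjB : ∃ Q : Matrix (Fin n) (Fin n) ℂ, IsUnit Q ∧ B' = Q * B * Q⁻¹)
    (hconjAB : ∃ Q : Matrix (Fin n) (Fin n) ℂ, IsUnit Q ∧
      A' * B'⁻¹ = Q * (A * B⁻¹) * Q⁻¹) :
    ∃ P : Matrix (Fin n) (Fin n) ℂ, IsUnit P ∧ A' = P * A * P⁻¹ ∧ B' = P * B * P⁻¹ := by
  obtain ⟨Q₁, hQ₁, rfl⟩ := hconjA
  obtain ⟨Q₂, hQ₂, rfl⟩ := hconjB
  obtain ⟨Q₃, hQ₃, hQ₃AB⟩ := hconjAB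
  have hcharA : (Q₁ * A * Q₁⁻¹).charpoly = A.charpoly := by
    simpa using charpoly_units_conj hQ₁.unit A
  have hcharB : (Q₂ * B * Q₂⁻¹).charpoly = B.charpoly := by
    simpa using charpoly_units_conj hQ₂.unit B
  obtain ⟨u, w, huw⟩ := exists_sub_eq_vecMulVec_of_rank_mul_inv_sub_one_le_one hB hpseudo.le
  obtain ⟨u', w', huw'⟩ := exists_sub_eq_vecMulVec_of_rank_mul_inv_sub_one_le_one hB'
    (by rw [hQ₃AB, rank_conj_sub_one hQ₃, hpseudo])
  have hspec : ∀ μ, ¬(A.charpoly.IsRoot μ ∧ B.charpoly.IsRoot μ) := by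
    simpa only [isRoot_charpoly_iff_det_sub_smul_one_eq_zero] using hdisj
  exact exists_conj_of_sub_eq_vecMulVec huw huw' (isUnit_krylov_of_sub_eq_vecMulVec huw hspec)
    (isUnit_krylov_of_sub_eq_vecMulVec huw' (by rwa [hcharA, hcharB])) hcharA hcharB

/-- Levelt's rigidity theorem: if `A`, `B` have disjoint spectra and `A·B⁻¹` is a
pseudo-reflection, then any triple `(A', B', A'·B'⁻¹)` conjugate componentwise to
`(A, B, A·B⁻¹)` is simultaneously conjugate to `(A, B)`. -/
theorem levelt_rigidity (n : ℕ)
    (A B A' B' : Matrix (Fin n) (Fin n) ℂ)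
    (hA : IsUnit A) (hB : IsUnit B) (hA' : IsUnit A') (hB' : IsUnit B')
    (hdisj : ∀ μ : ℂ, ¬((A - μ • (1 : Matrix (Fin n) (Fin n) ℂ)).det = 0 ∧
      (B - μ • (1 : Matrix (Fin n) (Fin n) ℂ)).det = 0))
    (hpseudo : (A * B⁻¹ - 1).rank = 1)
    (hconjA : ∃ Q : Matrix (Fin n) (Fin n) ℂ, IsUnit Q ∧ A' = Q * A * Q⁻¹)
    (hconjB : ∃ Q : Matrix (Fin n) (Fin n) ℂ, IsUnit Q ∧ B' = Q * B * Q⁻¹)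
    (hconjAB : ∃ Q : Matrix (Fin n) (Fin n) ℂ, IsUnit Q ∧
      A' * B'⁻¹ = Q * (A * B⁻¹) * Q⁻¹) :
    ∃ P : Matrix (Fin n) (Fin n) ℂ, IsUnit P ∧ A' = P * A * P⁻¹ ∧ B' = P * B * P⁻¹ :=
  levelt_rigidity_general n A B A' B' hB hB' hdisj hpseudo hconjA hconjB hconjAB
end

section
/- For all real numbers α and β, the complex 2×2 matrices M₀ = e^{−π·i·(α+β)}·[[0, −1], [1, 2·cos((α+β)·π)]], M₁ = [[1, 4·sin(α·π)·sin(β·π)], [0, 1]], and M∞ = e^{π·i·(α+β)}·[[2·cos((α−β)·π), 1], [−1, 0]] satisfy M₀·M₁·M∞ = I, the 2×2 identity matrix. -/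
open Matrix Complex

/-! After the two scalar factors `e^{∓πi(α+β)}` cancel, the matrix product is unipotent lower
triangular with off-diagonal entry `2 cos((α-β)π) - 4 sin(απ) sin(βπ) - 2 cos((α+β)π)`, which
vanishes by the addition formulas for the cosine. -/

theorem smul_mul_mul_smul {R A : Type*} [CommSemiring R] [Semiring A] [Algebra R A]
    (a b : R) (x y z : A) : (a • x) * y * (b • z) = (a * b) • (x * y * z) := by
  rw [smul_mul_assoc, mul_smul_comm, smul_mul_assoc, smul_smul, mul_comm b a]

theorem companion_mul_transvection_mul_companion {R : Type*} [CommRing R] (t u s : R) :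
    !![0, -1; 1, t] * !![1, u; 0, 1] * !![s, 1; -1, 0] = !![1, 0; s - (u + t), 1] := by
  simp only [mul_fin_two, EmbeddingLike.apply_eq_iff_eq, vecCons_inj]
  ring_nf
  simp

theorem companion_mul_transvection_mul_companion_eq_one {R : Type*} [CommRing R] {t u s : R}
    (h : u + t = s) : !![0, -1; 1, t] * !![1, u; 0, 1] * !![s, 1; -1, 0] = 1 := by
  rw [companion_mul_transvection_mul_companion, h, sub_self, Matrix.one_fin_two]

theorem Real.four_mul_sin_mul_sin_add_two_mul_cos_add (a b : ℝ) :
    4 * Real.sin a * Real.sin b + 2 * Real.cos (a + b) = 2 * Real.cos (a - b) := by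
  rw [Real.cos_add, Real.cos_sub]
  ring

/-- The monodromy generators of the hypergeometric equation `₂F₁(α, β, γ)` in the case
`γ − α − β = 0` multiply to the identity: `M₀·M₁·M∞ = I`. -/
theorem hypergeometric_monodromy_product (α β : ℝ) :
    (Complex.exp (-(Real.pi : ℂ) * Complex.I * ((α : ℂ) + β)) •
        (!![0, -1; 1, 2 * (Real.cos ((α + β) * Real.pi) : ℂ)] :
          Matrix (Fin 2) (Fin 2) ℂ)) *
      (!![1, 4 * (Real.sin (α * Real.pi) : ℂ) * (Real.sin (β * Real.pi) : ℂ); 0, 1] :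
          Matrix (Fin 2) (Fin 2) ℂ) *
      (Complex.exp ((Real.pi : ℂ) * Complex.I * ((α : ℂ) + β)) •
        (!![2 * (Real.cos ((α - β) * Real.pi) : ℂ), 1; -1, 0] :
          Matrix (Fin 2) (Fin 2) ℂ)) = 1 := by
  have hscalars : Complex.exp (-(Real.pi : ℂ) * Complex.I * ((α : ℂ) + β)) *
      Complex.exp ((Real.pi : ℂ) * Complex.I * ((α : ℂ) + β)) = 1 := by
    rw [neg_mul, neg_mul, Complex.exp_neg, inv_mul_cancel₀ (Complex.exp_ne_zero _)]
  rw [smul_mul_mul_smul, hscalars, one_smul]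
  apply companion_mul_transvection_mul_companion_eq_one
  have htrig := Real.four_mul_sin_mul_sin_add_two_mul_cos_add (α * Real.pi) (β * Real.pi)
  rw [← add_mul, ← sub_mul] at htrig
  exact_mod_cast htrig
end

section
/- Let σ₁, σ₂, σ₃ be the ℂ-algebra endomorphisms of the polynomial ring ℂ[X₀, X₁, X₂, X₃] determined by σ₁ : X₀ ↦ i·X₀, X₁ ↦ −i·X₁, X₂ ↦ X₂, X₃ ↦ X₃; σ₂ : X₀ ↦ X₀, X₁ ↦ i·X₁, X₂ ↦ −i·X₂, X₃ ↦ X₃; σ₃ : X₀ ↦ X₀, X₁ ↦ X₁, X₂ ↦ i·X₂, X₃ ↦ −i·X₃, where i is the imaginary unit. Then a polynomial p ∈ ℂ[X₀, X₁, X₂, X₃] satisfies σ₁(p) = p, σ₂(p) = p and σ₃(p) = p if and only if p lies in the ℂ-subalgebra generated by X₀⁴, X₁⁴, X₂⁴, X₃⁴ and X₀·X₁·X₂·X₃. -/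
/-! Each `σₖ` is a diagonal substitution `X i ↦ c i • X i`, which multiplies the coefficient of
`X^d` by the character value `∏ c i ^ d i`. So `p` is invariant under all three iff every exponent
`d` in its support has `I ^ dⱼ * (-I) ^ dⱼ₊₁ = 1` for `j = 0, 1, 2`, i.e. `d₀ ≡ d₁ ≡ d₂ ≡ d₃ (mod 4)`.
Writing `dᵢ = 4 qᵢ + r` with the common residue `r`, such a monomial is
`∏ (Xᵢ⁴)^qᵢ * (X₀X₁X₂X₃)^r`. Conversely the generators are fixed since every `c i ^ 4 = 1` and
`∏ c i = 1`. -/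

open MvPolynomial

theorem IsPrimitiveRoot.pow_mul_inv_pow_eq_one_iff {G : Type*} [CommGroupWithZero G] {ζ : G}
    {k : ℕ} (h : IsPrimitiveRoot ζ k) (hζ : ζ ≠ 0) (a b : ℕ) :
    ζ ^ a * ζ⁻¹ ^ b = 1 ↔ a ≡ b [MOD k] := by
  rw [Nat.modEq_iff_dvd, dvd_sub_comm, ← h.zpow_eq_one_iff_dvd, zpow_sub₀ hζ, zpow_natCast,
    zpow_natCast, inv_pow, div_eq_mul_inv]

theorem Complex.I_pow_mul_neg_I_pow_eq_one_iff (a b : ℕ) :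
    Complex.I ^ a * (-Complex.I) ^ b = 1 ↔ a ≡ b [MOD 4] := by
  rw [← Complex.inv_I]
  exact Complex.isPrimitiveRoot_I.pow_mul_inv_pow_eq_one_iff Complex.I_ne_zero a b

namespace MvPolynomial

variable {R σ : Type*} [CommSemiring R]

noncomputable def scaleVars (c : σ → R) : MvPolynomial σ R →ₐ[R] MvPolynomial σ R :=
  aeval fun i => C (c i) * X i

theorem scaleVars_monomial (c : σ → R) (d : σ →₀ ℕ) (a : R) :
    scaleVars c (monomial d a) = monomial d (a * d.prod fun i n => c i ^ n) := by
  simp only [scaleVars, aeval_monomial, mul_pow, Finsupp.prod_mul, ← C_pow, ← map_finsuppProd]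
  rw [monomial_eq, C_mul, algebraMap_eq]
  ring

theorem coeff_scaleVars (c : σ → R) (p : MvPolynomial σ R) (d : σ →₀ ℕ) :
    coeff d (scaleVars c p) = (d.prod fun i n => c i ^ n) * coeff d p := by
  classical
  induction p using MvPolynomial.induction_on' with
  | monomial e a =>
    rw [scaleVars_monomial, coeff_monomial, coeff_monomial]
    split_ifs with h
    · rw [h, mul_comm]
    · rw [mul_zero]
  | add p q hp hq => rw [map_add, coeff_add, coeff_add, hp, hq, mul_add]

theorem scaleVars_eq_self_iff [IsCancelMulZero R] (c : σ → R) (p : MvPolynomial σ R) :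
    scaleVars c p = p ↔ ∀ d ∈ p.support, (d.prod fun i n => c i ^ n) = 1 := by
  refine ⟨fun h d hd => ?_, fun h => ?_⟩
  · have := coeff_scaleVars c p d
    rw [h] at this
    exact mul_right_cancel₀ (mem_support_iff.mp hd) (by rw [← this, one_mul])
  · ext d
    rw [coeff_scaleVars]
    by_cases hd : d ∈ p.support
    · rw [h d hd, one_mul]
    · rw [notMem_support_iff.mp hd, mul_zero]

theorem algHom_eq_scaleVars {φ : MvPolynomial σ R →ₐ[R] MvPolynomial σ R} (c : σ → R)
    (h : ∀ i, φ (X i) = C (c i) * X i) : φ = scaleVars c :=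
  algHom_ext fun i => by rw [h, scaleVars, aeval_X]

theorem adjoin_le_equalizer_scaleVars [Fintype σ] (c : σ → R) (k : ℕ) (hk : ∀ i, c i ^ k = 1)
    (hc : ∏ i, c i = 1) :
    Algebra.adjoin R (Set.range (fun i => X i ^ k) ∪ {∏ i, X i}) ≤
      AlgHom.equalizer (scaleVars c) (AlgHom.id R (MvPolynomial σ R)) := by
  refine Algebra.adjoin_le ?_
  rintro _ (⟨i, rfl⟩ | rfl) <;> simp only [SetLike.mem_coe, AlgHom.mem_equalizer, AlgHom.id_apply]
  · rw [map_pow, scaleVars, aeval_X, mul_pow, ← C_pow, hk, C_1, one_mul]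
  · rw [map_prod, scaleVars]
    simp only [aeval_X]
    rw [Finset.prod_mul_distrib, ← map_prod, hc, C_1, one_mul]

theorem monomial_mem_adjoin_of_mod_eq [Fintype σ] (k r : ℕ) (d : σ →₀ ℕ) (hd : ∀ i, d i % k = r)
    (a : R) :
    monomial d a ∈ Algebra.adjoin R (Set.range (fun i => X i ^ k) ∪ {∏ i, X i}) := by
  have hsplit : monomial d a = C a * (∏ i, (X i ^ k) ^ (d i / k)) * (∏ i, X i) ^ r := by
    rw [monomial_eq, Finsupp.prod_fintype _ _ fun _ => pow_zero _, mul_assoc, ← Finset.prod_pow,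
      ← Finset.prod_mul_distrib]
    congr 2 with i
    rw [← pow_mul, ← pow_add, ← hd i, Nat.div_add_mod]
  set A := Algebra.adjoin R (Set.range (fun i => (X i : MvPolynomial σ R) ^ k) ∪ {∏ i, X i})
  have hpow : ∀ i, X i ^ k ∈ A := fun i => Algebra.subset_adjoin (Or.inl ⟨i, rfl⟩)
  have hprod : ∏ i, X i ∈ A := Algebra.subset_adjoin (Or.inr rfl)
  rw [hsplit, ← algebraMap_eq]
  exact A.mul_mem (A.mul_mem (A.algebraMap_mem a)
    (A.prod_mem fun i _ => A.pow_mem (hpow i) _)) (A.pow_mem hprod r)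

theorem range_X_pow_union_prod_X_fin_four (k : ℕ) :
    Set.range (fun i => X i ^ k) ∪ {∏ i, X i} =
      ({X 0 ^ k, X 1 ^ k, X 2 ^ k, X 3 ^ k, X 0 * X 1 * X 2 * X 3} :
        Set (MvPolynomial (Fin 4) R)) := by
  simp only [Fin.range_fin_succ, Set.range_eq_empty, Fin.tail, Fin.prod_univ_four,
    Set.insert_union, Set.empty_union]
  rfl

end MvPolynomial

/-- The ring of invariants of the diagonal group `C₄ × C₄` of symplectic automorphisms
acting on `ℂ[X₀, X₁, X₂, X₃]` is generated by `X₀⁴, X₁⁴, X₂⁴, X₃⁴, X₀X₁X₂X₃`. -/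
theorem invariants_C4_squared
    (σ₁ σ₂ σ₃ : MvPolynomial (Fin 4) ℂ →ₐ[ℂ] MvPolynomial (Fin 4) ℂ)
    (h₁₀ : σ₁ (X 0) = C Complex.I * X 0) (h₁₁ : σ₁ (X 1) = C (-Complex.I) * X 1)
    (h₁₂ : σ₁ (X 2) = X 2) (h₁₃ : σ₁ (X 3) = X 3)
    (h₂₀ : σ₂ (X 0) = X 0) (h₂₁ : σ₂ (X 1) = C Complex.I * X 1)
    (h₂₂ : σ₂ (X 2) = C (-Complex.I) * X 2) (h₂₃ : σ₂ (X 3) = X 3)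
    (h₃₀ : σ₃ (X 0) = X 0) (h₃₁ : σ₃ (X 1) = X 1)
    (h₃₂ : σ₃ (X 2) = C Complex.I * X 2) (h₃₃ : σ₃ (X 3) = C (-Complex.I) * X 3)
    (p : MvPolynomial (Fin 4) ℂ) :
    (σ₁ p = p ∧ σ₂ p = p ∧ σ₃ p = p) ↔
      p ∈ Algebra.adjoin ℂ
        ({X 0 ^ 4, X 1 ^ 4, X 2 ^ 4, X 3 ^ 4, X 0 * X 1 * X 2 * X 3} :
          Set (MvPolynomial (Fin 4) ℂ)) := by
  rw [algHom_eq_scaleVars (φ := σ₁) ![Complex.I, -Complex.I, 1, 1] fun i => by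
      fin_cases i <;> simp [h₁₀, h₁₁, h₁₂, h₁₃],
    algHom_eq_scaleVars (φ := σ₂) ![1, Complex.I, -Complex.I, 1] fun i => by
      fin_cases i <;> simp [h₂₀, h₂₁, h₂₂, h₂₃],
    algHom_eq_scaleVars (φ := σ₃) ![1, 1, Complex.I, -Complex.I] fun i => by
      fin_cases i <;> simp [h₃₀, h₃₁, h₃₂, h₃₃],
    ← range_X_pow_union_prod_X_fin_four]
  constructor
  · rintro ⟨e₁, e₂, e₃⟩
    rw [p.as_sum]
    refine Subalgebra.sum_mem _ fun d hd => monomial_mem_adjoin_of_mod_eq 4 (d 0 % 4) d ?_ _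
    have weight := fun c (e : scaleVars c p = p) => (scaleVars_eq_self_iff c p).mp e d hd
    have hd₀₁ : d 0 % 4 = d 1 % 4 := (Complex.I_pow_mul_neg_I_pow_eq_one_iff _ _).mp
      (by simpa [Fin.prod_univ_four] using weight _ e₁)
    have hd₁₂ : d 1 % 4 = d 2 % 4 := (Complex.I_pow_mul_neg_I_pow_eq_one_iff _ _).mp
      (by simpa [Fin.prod_univ_four] using weight _ e₂)
    have hd₂₃ : d 2 % 4 = d 3 % 4 := (Complex.I_pow_mul_neg_I_pow_eq_one_iff _ _).mp
      (by simpa [Fin.prod_univ_four] using weight _ e₃)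
    intro i
    fin_cases i <;> simp only [Fin.zero_eta, Fin.mk_one, Fin.reduceFinMk] <;> omega
  · intro hp
    have hfix : ∀ c : Fin 4 → ℂ, (∀ i, c i ^ 4 = 1) → ∏ i, c i = 1 → scaleVars c p = p :=
      fun c hk hc => adjoin_le_equalizer_scaleVars c 4 hk hc hp
    refine ⟨hfix _ ?_ ?_, hfix _ ?_ ?_, hfix _ ?_ ?_⟩
    all_goals first
      | intro i; fin_cases i <;> simp [Even.neg_pow (by decide : Even 4)]
      | simp [Fin.prod_univ_four]
end

section
/- Let Φ : ℂ[Y₀, Y₁, Y₂, Y₃, Y₄] → ℂ[X₀, X₁, X₂, X₃] be the ℂ-algebra homomorphism of multivariate polynomial rings determined by Φ(Y_j) = X_j⁴ for j = 0, 1, 2, 3 and Φ(Y₄) = X₀·X₁·X₂·X₃. Then the kernel of Φ is the principal ideal generated by Y₀·Y₁·Y₂·Y₃ − Y₄⁴. -/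
/-!
Modulo `Y₀ ⋯ Y_{n-1} - Y_n ^ d` every polynomial reduces to one of degree `< d` in `Y_n`.
The map `Y_j ↦ X_j ^ d`, `Y_n ↦ X₀ ⋯ X_{n-1}` sends the monomial `Y^m` to the monomial `X^e`
with `e_j = d * m_j + m_n`, and on exponents with `m_n < d` this is injective: `m_n` is
recovered as `e_j mod d`, and then every `m_j`. So the map is injective on reduced polynomials,
and a polynomial in the kernel reduces to `0`.
-/

open MvPolynomial

namespace MvPolynomial

variable {R : Type*} [CommRing R] {n d : ℕ}

variable (R) in
noncomputable def invariantMap (n d : ℕ) :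
    MvPolynomial (Fin (n + 1)) R →ₐ[R] MvPolynomial (Fin n) R :=
  aeval (Fin.lastCases (∏ j, X j) fun j => X j ^ d)

variable (R) in
noncomputable def invariantRelation (n d : ℕ) : MvPolynomial (Fin (n + 1)) R :=
  ∏ j : Fin n, X j.castSucc - X (Fin.last n) ^ d

noncomputable def invariantExponent (d : ℕ) (m : Fin (n + 1) →₀ ℕ) : Fin n →₀ ℕ :=
  Finsupp.equivFunOnFinite.symm fun j => d * m j.castSucc + m (Fin.last n)

@[simp]
theorem invariantExponent_apply (m : Fin (n + 1) →₀ ℕ) (j : Fin n) :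
    invariantExponent d m j = d * m j.castSucc + m (Fin.last n) := rfl

theorem invariantExponent_injOn [NeZero n] (hd : 0 < d) :
    Set.InjOn (invariantExponent d) {m : Fin (n + 1) →₀ ℕ | m (Fin.last n) < d} := by
  intro m hm m' hm' h
  have hj (j : Fin n) :
      d * m j.castSucc + m (Fin.last n) = d * m' j.castSucc + m' (Fin.last n) := by
    simp only [← invariantExponent_apply, h]
  have hlast : m (Fin.last n) = m' (Fin.last n) := by
    simpa [Nat.mul_add_mod, Nat.mod_eq_of_lt hm, Nat.mod_eq_of_lt hm'] using
      congr_arg (· % d) (hj 0)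
  ext i
  induction i using Fin.lastCases with
  | last => exact hlast
  | cast j => exact Nat.eq_of_mul_eq_mul_left hd (Nat.add_right_cancel (hlast ▸ hj j))

@[simp]
theorem invariantMap_X_castSucc (j : Fin n) :
    invariantMap R n d (X j.castSucc) = X j ^ d := by
  simp [invariantMap]

@[simp]
theorem invariantMap_X_last : invariantMap R n d (X (Fin.last n)) = ∏ j, X j := by
  simp [invariantMap]

theorem invariantMap_monomial (m : Fin (n + 1) →₀ ℕ) (c : R) :
    invariantMap R n d (monomial m c) = monomial (invariantExponent d m) c := by
  simp only [monomial_eq, Finsupp.prod_pow, map_mul, algHom_C, map_prod, map_pow,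
    Fin.prod_univ_castSucc, invariantMap_X_castSucc, invariantMap_X_last, invariantExponent_apply,
    pow_add, pow_mul, Finset.prod_mul_distrib, Finset.prod_pow, algebraMap_eq]

theorem invariantRelation_mem_ker :
    invariantRelation R n d ∈ RingHom.ker (invariantMap R n d) := by
  simp [invariantRelation, ← Finset.prod_pow]

theorem coeff_invariantExponent_invariantMap [NeZero n] (hd : 0 < d)
    {P : MvPolynomial (Fin (n + 1)) R}
    (hP : degreeOf (Fin.last n) P < d) {m : Fin (n + 1) →₀ ℕ} (hm : m (Fin.last n) < d) :
    coeff (invariantExponent d m) (invariantMap R n d P) = coeff m P := by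
  rw [degreeOf_lt_iff hd] at hP
  conv_lhs => rw [P.as_sum, map_sum]
  simp only [invariantMap_monomial, coeff_sum, coeff_monomial]
  refine (Finset.sum_eq_single m (fun m' hm' hne => if_neg fun h => hne ?_) fun hm => ?_).trans ?_
  · exact invariantExponent_injOn hd (hP m' hm') hm h
  · rw [if_pos rfl, notMem_support_iff.mp hm]
  · exact if_pos rfl

theorem eq_zero_of_invariantMap_eq_zero [NeZero n] (hd : 0 < d)
    {P : MvPolynomial (Fin (n + 1)) R}
    (hP : degreeOf (Fin.last n) P < d) (h : invariantMap R n d P = 0) : P = 0 := by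
  ext m
  by_cases hm : m ∈ P.support
  · rw [← coeff_invariantExponent_invariantMap hd hP ((degreeOf_lt_iff hd).mp hP m hm), h,
      coeff_zero, coeff_zero]
  · rw [notMem_support_iff.mp hm, coeff_zero]

theorem degreeOf_monomial_le {σ : Type*} (s : σ →₀ ℕ) (i : σ) (c : R) :
    degreeOf i (monomial s c) ≤ s i :=
  degreeOf_le_iff.mpr fun m hm => by rw [Finset.mem_singleton.mp (support_monomial_subset hm)]

theorem exists_degreeOf_lt_monomial_sub_mem_span (hd : 0 < d) (m : Fin (n + 1) →₀ ℕ) (c : R) :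
    ∃ Q, degreeOf (Fin.last n) Q < d ∧ monomial m c - Q ∈ Ideal.span {invariantRelation R n d} := by
  set k := m (Fin.last n)
  set A : MvPolynomial (Fin (n + 1)) R :=
    monomial (m.erase (Fin.last n)) c * X (Fin.last n) ^ (k % d)
  -- `Y^m = A * (Y_last ^ d) ^ (k / d)` and `Y_last ^ d ≡ ∏ j, Y_j`
  refine ⟨A * (∏ j : Fin n, X j.castSucc) ^ (k / d), ?_, ?_⟩
  · have hA : degreeOf (Fin.last n) A < d := by
      refine (degreeOf_mul_le _ _ _).trans_lt ?_
      rw [X_pow_eq_monomial]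
      refine (add_le_add (degreeOf_monomial_le _ _ _) (degreeOf_monomial_le _ _ _)).trans_lt ?_
      simpa using Nat.mod_lt k hd
    have hprod : degreeOf (Fin.last n) (∏ j : Fin n, (X j.castSucc : MvPolynomial _ R)) = 0 :=
      Nat.eq_zero_of_le_zero <| (degreeOf_prod_le _ _ _).trans_eq <| Finset.sum_eq_zero
        fun j _ => degreeOf_X_of_ne (Fin.castSucc_lt_last j).ne'
    refine (degreeOf_mul_le _ _ _).trans_lt ?_
    have := degreeOf_pow_le (Fin.last n) (∏ j : Fin n, (X j.castSucc : MvPolynomial _ R)) (k / d)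
    rw [hprod, mul_zero, Nat.le_zero] at this
    rwa [this, add_zero]
  · have hm : monomial m c = A * (X (Fin.last n) ^ d) ^ (k / d) := by
      rw [mul_right_comm, ← pow_mul, mul_assoc, ← pow_add, Nat.div_add_mod, X_pow_eq_monomial,
        monomial_mul, mul_one, Finsupp.erase_add_single]
    rw [hm, Ideal.mem_span_singleton, invariantRelation, dvd_sub_comm, ← mul_sub]
    exact (sub_dvd_pow_sub_pow _ _ _).mul_left A

theorem exists_degreeOf_lt_sub_mem_span (hd : 0 < d) (P : MvPolynomial (Fin (n + 1)) R) :
    ∃ Q, degreeOf (Fin.last n) Q < d ∧ P - Q ∈ Ideal.span {invariantRelation R n d} := by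
  induction P using induction_on' with
  | monomial m c => exact exists_degreeOf_lt_monomial_sub_mem_span hd m c
  | add P₁ P₂ h₁ h₂ =>
    obtain ⟨Q₁, hQ₁, hPQ₁⟩ := h₁
    obtain ⟨Q₂, hQ₂, hPQ₂⟩ := h₂
    refine ⟨Q₁ + Q₂, (degreeOf_add_le _ _ _).trans_lt (max_lt hQ₁ hQ₂), ?_⟩
    rw [add_sub_add_comm]
    exact add_mem hPQ₁ hPQ₂

theorem ker_invariantMap [NeZero n] (hd : 0 < d) :
    RingHom.ker (invariantMap R n d) = Ideal.span {invariantRelation R n d} := by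
  have hle : Ideal.span {invariantRelation R n d} ≤ RingHom.ker (invariantMap R n d) :=
    (Ideal.span_singleton_le_iff_mem _).mpr invariantRelation_mem_ker
  refine le_antisymm (fun P hP => ?_) hle
  obtain ⟨Q, hQ, hPQ⟩ := exists_degreeOf_lt_sub_mem_span hd P
  have hQker : invariantMap R n d Q = 0 := by
    have := hle hPQ
    rwa [RingHom.mem_ker, map_sub, RingHom.mem_ker.mp hP, zero_sub, neg_eq_zero] at this
  rwa [eq_zero_of_invariantMap_eq_zero hd hQ hQker, sub_zero] at hPQ

end MvPolynomial

/-- The presentation `ℂ[x₀⁴, x₁⁴, x₂⁴, x₃⁴, x₀x₁x₂x₃] ≅ ℂ[Y₀,…,Y₄]/(Y₀Y₁Y₂Y₃ − Y₄⁴)`: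
the kernel of `Φ : Y_j ↦ X_j⁴ (j ≤ 3), Y₄ ↦ X₀X₁X₂X₃` is generated by
`Y₀Y₁Y₂Y₃ − Y₄⁴`. -/
theorem ker_invariant_presentation
    (Φ : MvPolynomial (Fin 5) ℂ →ₐ[ℂ] MvPolynomial (Fin 4) ℂ)
    (h0 : Φ (X 0) = X 0 ^ 4) (h1 : Φ (X 1) = X 1 ^ 4)
    (h2 : Φ (X 2) = X 2 ^ 4) (h3 : Φ (X 3) = X 3 ^ 4)
    (h4 : Φ (X 4) = X 0 * X 1 * X 2 * X 3) :
    RingHom.ker Φ = Ideal.span ({X 0 * X 1 * X 2 * X 3 - X 4 ^ 4} :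
      Set (MvPolynomial (Fin 5) ℂ)) := by
  have hΦ : Φ = invariantMap ℂ 4 4 := by
    ext i : 1
    fin_cases i
    · exact h0.trans (invariantMap_X_castSucc 0).symm
    · exact h1.trans (invariantMap_X_castSucc 1).symm
    · exact h2.trans (invariantMap_X_castSucc 2).symm
    · exact h3.trans (invariantMap_X_castSucc 3).symm
    · exact h4.trans (by rw [← Fin.prod_univ_four]; exact invariantMap_X_last.symm)
  have hrel : X 0 * X 1 * X 2 * X 3 - X 4 ^ 4 = invariantRelation ℂ 4 4 := by
    simp [invariantRelation, Fin.prod_univ_four]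
  rw [hΦ, hrel]
  exact ker_invariantMap four_pos
end

section
/- Let υ ∈ ℂ be a primitive 6th root of unity, and let σ₁, σ₂ be the ℂ-algebra endomorphisms of ℂ[X₀, X₁, X₂] determined by σ₁ : X₀ ↦ X₀, X₁ ↦ υ·X₁, X₂ ↦ υ⁵·X₂ and σ₂ : X₀ ↦ υ·X₀, X₁ ↦ υ⁵·X₁, X₂ ↦ X₂. Then a polynomial p ∈ ℂ[X₀, X₁, X₂] satisfies σ₁(p) = p and σ₂(p) = p if and only if p lies in the ℂ-subalgebra generated by X₀⁶, X₁⁶, X₂⁶ and X₀·X₁·X₂. -/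
open MvPolynomial

/-!
Both automorphisms are diagonal, so each monomial `X^a` is an eigenvector:
`σ (X^a) = υ^(∑ wᵢ aᵢ) X^a` for the weight vector `w` of `σ`. Hence `p` is invariant iff every
monomial in its support is, i.e. iff `6 ∣ a₁ + 5a₂` and `6 ∣ a₀ + 5a₁`, which says
`a₀ ≡ a₁ ≡ a₂ (mod 6)`. With `r` the common residue, `X^a = (X₀⁶)^q₀ (X₁⁶)^q₁ (X₂⁶)^q₂ (X₀X₁X₂)^r`.
-/

theorem IsPrimitiveRoot.finsuppProd_pow_eq_one_iff_dvd {R ι : Type*} [CommMonoid R] [Fintype ι]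
    {υ : R} {n : ℕ} (hυ : IsPrimitiveRoot υ n) (w : ι → ℕ) (a : ι →₀ ℕ) :
    (a.prod fun i k => (υ ^ w i) ^ k) = 1 ↔ n ∣ ∑ i, w i * a i := by
  rw [Finsupp.prod_fintype _ _ fun i => pow_zero _]
  simp only [← pow_mul, Finset.prod_pow_eq_pow_sum]
  exact hυ.pow_eq_one_iff_dvd _

namespace MvPolynomial

section Diagonal

variable {R ι : Type*} [CommSemiring R] {σ : MvPolynomial ι R →ₐ[R] MvPolynomial ι R}
    {c : ι → R}

theorem map_monomial_of_map_X_eq_C_mul (hσ : ∀ i, σ (X i) = C (c i) * X i)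
    (a : ι →₀ ℕ) (r : R) :
    σ (monomial a r) = monomial a ((a.prod fun i k => c i ^ k) * r) := by
  have hC : (C (a.prod fun i k => c i ^ k) : MvPolynomial ι R) =
      a.prod fun i k => C (c i) ^ k := by
    simp only [map_finsuppProd, map_pow]
  rw [monomial_eq, monomial_eq, map_mul, algHom_C, algebraMap_eq, map_finsuppProd, C_mul, hC]
  simp only [map_pow, hσ, mul_pow, Finsupp.prod_mul]
  ring

theorem coeff_map_of_map_X_eq_C_mul (hσ : ∀ i, σ (X i) = C (c i) * X i)
    (p : MvPolynomial ι R) (a : ι →₀ ℕ) :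
    coeff a (σ p) = (a.prod fun i k => c i ^ k) * coeff a p := by
  classical
  induction p using MvPolynomial.induction_on' with
  | monomial b r =>
    rw [map_monomial_of_map_X_eq_C_mul hσ, coeff_monomial, coeff_monomial]
    split_ifs with hab
    · rw [hab]
    · rw [mul_zero]
  | add p q hp hq => rw [map_add, coeff_add, coeff_add, hp, hq, mul_add]

theorem map_eq_self_iff_of_map_X_eq_C_mul [IsRightCancelMulZero R]
    (hσ : ∀ i, σ (X i) = C (c i) * X i) (p : MvPolynomial ι R) :
    σ p = p ↔ ∀ a ∈ p.support, (a.prod fun i k => c i ^ k) = 1 := by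
  simp only [MvPolynomial.ext_iff, coeff_map_of_map_X_eq_C_mul hσ, mul_left_eq_self₀,
    mem_support_iff, ne_eq, or_iff_not_imp_right]

end Diagonal

section RootsOfUnity

variable {R ι : Type*} [CommSemiring R] [Fintype ι] {υ : R} {n : ℕ}
    {σ : MvPolynomial ι R →ₐ[R] MvPolynomial ι R}

theorem map_monomial_eq_self_of_dvd (hυ : IsPrimitiveRoot υ n) (w : ι → ℕ)
    (hσ : ∀ i, σ (X i) = C (υ ^ w i) * X i)
    {a : ι →₀ ℕ} (ha : n ∣ ∑ i, w i * a i) (r : R) :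
    σ (monomial a r) = monomial a r := by
  rw [map_monomial_of_map_X_eq_C_mul hσ, (hυ.finsuppProd_pow_eq_one_iff_dvd w a).mpr ha, one_mul]

theorem map_eq_self_iff_dvd [IsRightCancelMulZero R] (hυ : IsPrimitiveRoot υ n) (w : ι → ℕ)
    (hσ : ∀ i, σ (X i) = C (υ ^ w i) * X i) (p : MvPolynomial ι R) :
    σ p = p ↔ ∀ a ∈ p.support, n ∣ ∑ i, w i * a i := by
  simp only [map_eq_self_iff_of_map_X_eq_C_mul hσ, hυ.finsuppProd_pow_eq_one_iff_dvd]

end RootsOfUnity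

section Adjoin

variable {R ι : Type*} [CommSemiring R]

theorem mem_adjoin_of_monomial_one_mem {s : Set (MvPolynomial ι R)} {p : MvPolynomial ι R}
    (h : ∀ a ∈ p.support, monomial a 1 ∈ Algebra.adjoin R s) : p ∈ Algebra.adjoin R s := by
  rw [p.as_sum]
  refine Subalgebra.sum_mem _ fun a ha => ?_
  rw [← mul_one (coeff a p), ← smul_eq_mul, ← smul_monomial]
  exact Subalgebra.smul_mem _ (h a ha) _

theorem monomial_one_mem_adjoin_of_modEq {n : ℕ} (a : Fin 3 →₀ ℕ)
    (h₀₁ : a 0 ≡ a 1 [MOD n]) (h₁₂ : a 1 ≡ a 2 [MOD n]) :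
    monomial a (1 : R) ∈
      Algebra.adjoin R {X 0 ^ n, X 1 ^ n, X 2 ^ n, X 0 * X 1 * X 2} := by
  have hdecomp : monomial a (1 : R) =
      (X 0 ^ n) ^ (a 0 / n) * (X 1 ^ n) ^ (a 1 / n) * (X 2 ^ n) ^ (a 2 / n) *
        (X 0 * X 1 * X 2) ^ (a 0 % n) := by
    conv_lhs => rw [monomial_eq, C_1, one_mul, Finsupp.prod_pow, Fin.prod_univ_three,
      ← Nat.div_add_mod (a 0) n, ← Nat.div_add_mod (a 1) n, ← Nat.div_add_mod (a 2) n,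
      ← h₀₁, ← h₀₁.trans h₁₂]
    ring
  rw [hdecomp]
  exact mul_mem (mul_mem (mul_mem (pow_mem (Algebra.subset_adjoin (by simp)) _)
    (pow_mem (Algebra.subset_adjoin (by simp)) _)) (pow_mem (Algebra.subset_adjoin (by simp)) _))
    (pow_mem (Algebra.subset_adjoin (by simp)) _)

theorem adjoin_le_equalizer_of_dvd_sum {υ : R} {n : ℕ}
    {σ : MvPolynomial (Fin 3) R →ₐ[R] MvPolynomial (Fin 3) R}
    (hυ : IsPrimitiveRoot υ n) (w : Fin 3 → ℕ) (hσ : ∀ i, σ (X i) = C (υ ^ w i) * X i)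
    (hw : n ∣ w 0 + w 1 + w 2) :
    Algebra.adjoin R {X 0 ^ n, X 1 ^ n, X 2 ^ n, X 0 * X 1 * X 2} ≤
      AlgHom.equalizer σ (AlgHom.id R _) := by
  have hXXX : (X 0 * X 1 * X 2 : MvPolynomial (Fin 3) R) =
      monomial (Finsupp.single 0 1 + Finsupp.single 1 1 + Finsupp.single 2 1) 1 := by
    simp only [X, monomial_mul, mul_one]
  refine Algebra.adjoin_le ?_
  rintro q (rfl | rfl | rfl | rfl) <;>
    simp only [SetLike.mem_coe, AlgHom.mem_equalizer, AlgHom.id_apply, X_pow_eq_monomial, hXXX] <;>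
    refine map_monomial_eq_self_of_dvd hυ w hσ ?_ _ <;>
    simp [Fin.sum_univ_three, hw]

end Adjoin

end MvPolynomial

/-- The ring of invariants of the diagonal group `C₂ × C₆` of symplectic automorphisms
acting on `ℂ[X₀, X₁, X₂]` is generated by `X₀⁶, X₁⁶, X₂⁶, X₀X₁X₂`. -/
theorem invariants_C2_times_C6
    (υ : ℂ) (hυ : IsPrimitiveRoot υ 6)
    (σ₁ σ₂ : MvPolynomial (Fin 3) ℂ →ₐ[ℂ] MvPolynomial (Fin 3) ℂ)
    (h₁₀ : σ₁ (X 0) = X 0) (h₁₁ : σ₁ (X 1) = C υ * X 1) (h₁₂ : σ₁ (X 2) = C (υ ^ 5) * X 2)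
    (h₂₀ : σ₂ (X 0) = C υ * X 0) (h₂₁ : σ₂ (X 1) = C (υ ^ 5) * X 1) (h₂₂ : σ₂ (X 2) = X 2)
    (p : MvPolynomial (Fin 3) ℂ) :
    (σ₁ p = p ∧ σ₂ p = p) ↔
      p ∈ Algebra.adjoin ℂ
        ({X 0 ^ 6, X 1 ^ 6, X 2 ^ 6, X 0 * X 1 * X 2} : Set (MvPolynomial (Fin 3) ℂ)) := by
  have hσ₁ : ∀ i, σ₁ (X i) = C (υ ^ ![0, 1, 5] i) * X i := by
    intro i; fin_cases i <;> simp [h₁₀, h₁₁, h₁₂]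
  have hσ₂ : ∀ i, σ₂ (X i) = C (υ ^ ![1, 5, 0] i) * X i := by
    intro i; fin_cases i <;> simp [h₂₀, h₂₁, h₂₂]
  constructor
  · rintro ⟨hp₁, hp₂⟩
    refine mem_adjoin_of_monomial_one_mem fun a ha => ?_
    have h₁ := (map_eq_self_iff_dvd hυ _ hσ₁ p).mp hp₁ a ha
    have h₂ := (map_eq_self_iff_dvd hυ _ hσ₂ p).mp hp₂ a ha
    simp only [Fin.sum_univ_three, Matrix.cons_val] at h₁ h₂
    exact monomial_one_mem_adjoin_of_modEq a (by unfold Nat.ModEq; omega)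
      (by unfold Nat.ModEq; omega)
  · intro hp
    exact ⟨adjoin_le_equalizer_of_dvd_sum hυ _ hσ₁ (by decide) hp,
      adjoin_le_equalizer_of_dvd_sum hυ _ hσ₂ (by decide) hp⟩
end

section
/- Let M₁ = (1/√2)·[[1, 1], [−1, 1]] and M∞ = (1/√2)·[[1, 2+√3], [−2+√3, 1]], real 2×2 matrices. Then M₁⁴ = −I and M∞⁴ = −I (so both have order 4 as projective transformations), yet for every integer n ≥ 1 the power (M₁·M∞⁻¹)ⁿ is not a scalar multiple of the identity matrix; in particular the subgroup of PGL(2,ℝ) generated by the images of M₁ and M∞ is infinite. -/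
/-!
Both `M₁` and `M∞` have determinant `1` and trace `√2`, so by Cayley–Hamilton they are roots of
`X² − √2 X + 1`, which divides `X⁴ + 1`. The product `C = M₁ M∞⁻¹` has determinant `1` and trace
`3`, so `C² = 3C − 1` and `Cⁿ = Uₙ C − Uₙ₋₁` with `Uₙ` the Lucas sequence of `X² − 3X + 1`, which
is positive for `n ≥ 1`. A scalar `Cⁿ` would then force `C` itself to be scalar, which it is not.
-/

open Matrix Polynomial

/-- The Lucas sequence `U_n(t, 1)`, i.e. the Chebyshev values `U_{n-1}(t/2)`. -/
def lucasU (t : ℝ) : ℕ → ℝ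
  | 0 => 0
  | 1 => 1
  | n + 2 => t * lucasU t (n + 1) - lucasU t n

theorem lucasU_pos {t : ℝ} (ht : 2 ≤ t) {n : ℕ} (hn : 0 < n) : 0 < lucasU t n := by
  have key : ∀ m : ℕ, (m : ℝ) ≤ lucasU t m ∧ lucasU t m + 1 ≤ lucasU t (m + 1) := by
    intro m
    induction m with
    | zero => simp [lucasU]
    | succ m ih =>
      refine ⟨by push_cast; linarith [ih.1, ih.2], ?_⟩
      rw [lucasU]
      nlinarith [ih.1, ih.2, (Nat.cast_nonneg m : (0 : ℝ) ≤ m)]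
  exact lt_of_lt_of_le (Nat.cast_pos.mpr hn) (key n).1

section PowersOfQuadraticElement

variable {R : Type*} [Ring R] [Algebra ℝ R] {t : ℝ} {a : R}

theorem pow_succ_eq_lucasU (ha : a ^ 2 = t • a - 1) (n : ℕ) :
    a ^ (n + 1) = lucasU t (n + 1) • a - lucasU t n • 1 := by
  induction n with
  | zero => simp [lucasU]
  | succ n ih =>
    rw [pow_succ, ih, sub_mul, smul_mul_assoc, ← sq, ha, smul_one_mul, lucasU, smul_sub,
      smul_smul, sub_smul, mul_comm t]
    abel

theorem pow_ne_smul_one_of_sq_eq (ht : 2 ≤ t) (ha : a ^ 2 = t • a - 1)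
    (hna : ∀ c : ℝ, a ≠ c • 1) {n : ℕ} (hn : 1 ≤ n) (c : ℝ) : a ^ n ≠ c • 1 := by
  obtain ⟨m, rfl⟩ := Nat.exists_eq_add_of_le' hn
  intro h
  rw [pow_succ_eq_lucasU ha, sub_eq_iff_eq_add, ← add_smul] at h
  have hU : lucasU t (m + 1) ≠ 0 := (lucasU_pos ht m.succ_pos).ne'
  refine hna ((lucasU t (m + 1))⁻¹ * (c + lucasU t m)) ?_
  rw [mul_smul, ← h, smul_smul, inv_mul_cancel₀ hU, one_smul]

end PowersOfQuadraticElement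

namespace Matrix

theorem pow_four_eq_neg_one_of_trace_sq_eq_two {R : Type*} [CommRing R] [Nontrivial R]
    (A : Matrix (Fin 2) (Fin 2) R) (ht : A.trace ^ 2 = 2) (hd : A.det = 1) : A ^ 4 = -1 := by
  have hC : (C A.trace) ^ 2 = (2 : R[X]) := by rw [← C_pow, ht, C_ofNat]
  have hdvd : A.charpoly ∣ X ^ 4 + 1 :=
    ⟨X ^ 2 + C A.trace * X + 1, by rw [charpoly_fin_two, hd, C_1]; linear_combination X ^ 2 * hC⟩
  have := aeval_eq_zero_of_dvd_aeval_eq_zero hdvd A.aeval_self_charpoly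
  simpa [eq_neg_iff_add_eq_zero] using this

theorem sq_eq_trace_smul_sub_det_smul {R : Type*} [CommRing R] (A : Matrix (Fin 2) (Fin 2) R) :
    A ^ 2 = A.trace • A - A.det • 1 := by
  ext i j; fin_cases i <;> fin_cases j <;> simp [sq, mul_apply, trace_fin_two, det_fin_two] <;> ring

theorem pow_ne_smul_one_of_two_le_trace (A : Matrix (Fin 2) (Fin 2) ℝ) (ht : 2 ≤ A.trace)
    (hd : A.det = 1) (hA : ∀ c : ℝ, A ≠ c • 1) {n : ℕ} (hn : 1 ≤ n) (c : ℝ) : A ^ n ≠ c • 1 :=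
  pow_ne_smul_one_of_sq_eq ht (by rw [sq_eq_trace_smul_sub_det_smul, hd, one_smul]) hA hn c

end Matrix

noncomputable def M₁ : Matrix (Fin 2) (Fin 2) ℝ := (√2)⁻¹ • !![1, 1; -1, 1]

noncomputable def Minfty : Matrix (Fin 2) (Fin 2) ℝ := (√2)⁻¹ • !![1, 2 + √3; -2 + √3, 1]

lemma sqrt_two_inv_sq : ((√2)⁻¹ : ℝ) ^ 2 = 2⁻¹ := by rw [inv_pow, Real.sq_sqrt zero_le_two]

lemma trace_M₁_sq : M₁.trace ^ 2 = 2 := by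
  rw [M₁, trace_smul, trace_fin_two_of, smul_eq_mul, mul_pow, sqrt_two_inv_sq]
  norm_num

lemma det_M₁ : M₁.det = 1 := by
  rw [M₁, det_smul, det_fin_two_of, Fintype.card_fin, sqrt_two_inv_sq]
  norm_num

lemma trace_Minfty_sq : Minfty.trace ^ 2 = 2 := by
  rw [Minfty, trace_smul, trace_fin_two_of, smul_eq_mul, mul_pow, sqrt_two_inv_sq]
  norm_num

lemma det_Minfty : Minfty.det = 1 := by
  rw [Minfty, det_smul, det_fin_two_of, Fintype.card_fin, sqrt_two_inv_sq]
  linear_combination (-2⁻¹ : ℝ) * Real.sq_sqrt (zero_le_three : (0 : ℝ) ≤ 3)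

lemma M₁_mul_Minfty_inv :
    M₁ * Minfty⁻¹ = (2⁻¹ : ℝ) • !![3 - √3, -1 - √3; 1 - √3, 3 + √3] := by
  rw [inv_def, det_Minfty, Ring.inverse_one, one_smul, Minfty, adjugate_smul, adjugate_fin_two_of,
    M₁, smul_mul_smul_comm, Fintype.card_fin, pow_one, ← sq, sqrt_two_inv_sq, mul_fin_two]
  congr 1
  ext i j; fin_cases i <;> fin_cases j <;> simp <;> ring

/-- The projective monodromy generators of `₂F₁(1/3, 1/12, 2/3)` satisfy `M₁⁴ = −I` and
`M∞⁴ = −I`, yet no positive power of `M₁·M∞⁻¹` is a scalar matrix; in particular the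
group they generate in `PGL(2,ℝ)` is infinite. -/
theorem finite_order_generators_infinite_group :
    ((Real.sqrt 2)⁻¹ • (!![1, 1; -1, 1] : Matrix (Fin 2) (Fin 2) ℝ)) ^ 4 = -1 ∧
    ((Real.sqrt 2)⁻¹ •
        (!![1, 2 + Real.sqrt 3; -2 + Real.sqrt 3, 1] : Matrix (Fin 2) (Fin 2) ℝ)) ^ 4 = -1 ∧
    ∀ n : ℕ, 1 ≤ n → ∀ c : ℝ,
      (((Real.sqrt 2)⁻¹ • (!![1, 1; -1, 1] : Matrix (Fin 2) (Fin 2) ℝ)) *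
          ((Real.sqrt 2)⁻¹ •
            (!![1, 2 + Real.sqrt 3; -2 + Real.sqrt 3, 1] : Matrix (Fin 2) (Fin 2) ℝ))⁻¹) ^ n
        ≠ c • (1 : Matrix (Fin 2) (Fin 2) ℝ) := by
  refine ⟨M₁.pow_four_eq_neg_one_of_trace_sq_eq_two trace_M₁_sq det_M₁,
    Minfty.pow_four_eq_neg_one_of_trace_sq_eq_two trace_Minfty_sq det_Minfty, fun n hn ↦ ?_⟩
  have htrace : 2 ≤ (M₁ * Minfty⁻¹).trace := by
    rw [M₁_mul_Minfty_inv, trace_smul, trace_fin_two_of]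
    norm_num
  have hdet : (M₁ * Minfty⁻¹).det = 1 := by
    rw [det_mul, det_nonsing_inv, det_M₁, det_Minfty, Ring.inverse_one, one_mul]
  have hscalar (c : ℝ) : M₁ * Minfty⁻¹ ≠ c • 1 := fun h ↦ by
    have h01 : -1 - √3 = 0 := by simpa [M₁_mul_Minfty_inv] using congrFun₂ h 0 1
    linarith [Real.sqrt_nonneg 3]
  exact (M₁ * Minfty⁻¹).pow_ne_smul_one_of_two_le_trace htrace hdet hscalar hn
end
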